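/- arXiv:2312.16908 — 7 statements merged into one kernel-verified Lean document; each statement's English description precedes it below -/
import Mathlib

section
/- Let q = 2^n with n ≥ 3 odd, and let a ∈ F_{q^2}^*. If a^{q+1} = 1 but a^{(q+1)/3} ≠ 1, then the map x ↦ x^{6q-5} + a·x is a bijection of F_{q^2}. -/
theorem stmt0 (n : ℕ) (hn : Odd n) (hn3 : 3 ≤ n)
    (F : Type*) [Field F] [Fintype F] (hF : Fintype.card F = (2 ^ n) ^ 2)
    (a : F) (ha : a ≠ 0)
    (h1 : a ^ (2 ^ n + 1) = 1) (h2 : a ^ ((2 ^ n + 1) / 3) ≠ 1) :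
    Function.Bijective (fun x : F => x ^ (6 * 2 ^ n - 5) + a * x) := by
  -- characteristic 2
  have hchar : CharP F 2 := by
    obtain ⟨m, hp, hc⟩ := FiniteField.card F (ringChar F)
    have hd : ringChar F ∣ 2 ^ (n * 2) := by
      rw [← pow_mul] at hF
      rw [hF] at hc
      exact hc ▸ dvd_pow_self (ringChar F) (by positivity : (m : ℕ) ≠ 0)
    have h2' : ringChar F = 2 :=
      (Nat.prime_dvd_prime_iff_eq hp Nat.prime_two).mp (hp.dvd_of_dvd_pow hd)
    exact h2' ▸ ringChar.charP F
  haveI := hchar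
  haveI : Fact (Nat.Prime 2) := ⟨Nat.prime_two⟩
  set q : ℕ := 2 ^ n with hq
  have hq8 : 8 ≤ q := by
    calc (8 : ℕ) = 2 ^ 3 := rfl
    _ ≤ 2 ^ n := Nat.pow_le_pow_right (by norm_num) hn3
  -- 3 ∣ q + 1
  have h3 : 3 ∣ q + 1 := by
    have : ((2 ^ n + 1 : ℕ) : ZMod 3) = 0 := by
      push_cast
      have h22 : (2 : ZMod 3) = -1 := by decide
      rw [h22, hn.neg_one_pow]; ring
    rw [hq]
    exact (ZMod.natCast_eq_zero_iff _ _).mp this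
  obtain ⟨M, hM⟩ := h3
  have hMq : (q + 1) / 3 = M := by omega
  rw [hMq] at h2
  have hMz : (q : ℤ) + 1 = 3 * M := by exact_mod_cast hM
  -- ¬ 5 ∣ q + 1
  have h5 : ¬ 5 ∣ q + 1 := by
    obtain ⟨k, hk⟩ := hn
    intro h
    have h0 : ((2 ^ n + 1 : ℕ) : ZMod 5) = 0 :=
      (ZMod.natCast_eq_zero_iff _ _).mpr (hq ▸ h)
    push_cast at h0
    rw [hk, pow_add, pow_mul] at h0
    have h4 : ((2 : ZMod 5) ^ 2) = -1 := by decide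
    rw [h4] at h0
    rcases Nat.even_or_odd k with he | ho
    · rw [he.neg_one_pow] at h0; revert h0; decide
    · rw [ho.neg_one_pow] at h0; revert h0; decide
  -- basic power facts
  have hpow : ∀ z : F, z ^ (q ^ 2) = z := fun z => by
    rw [← hF]; exact FiniteField.pow_card z
  have hpow1 : ∀ z : F, z ≠ 0 → z ^ (q ^ 2 - 1) = 1 := fun z hz => by
    rw [← hF]; exact FiniteField.pow_card_sub_one_eq_one z hz
  have hfrob : ∀ u v : F, (u + v) ^ q = u ^ q + v ^ q := fun u v => by
    rw [hq]; exact add_pow_char_pow u v 2 n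
  have hadd : ∀ b c : F, b + c = 0 → b = c := fun b c h => by
    have hcc : c + c = 0 := CharTwo.add_self_eq_zero c
    linear_combination h - hcc
  have haq : a ^ q * a = 1 := by rw [← pow_succ]; exact h1
  -- key identity
  have key : ∀ z : F, (z ^ (6 * q - 5) + a * z) ^ q * a * z ^ (6 * q - 5)
      = z ^ q * (z ^ (6 * q - 5) + a * z) := by
    intro z
    have hfz : (z ^ (6 * q - 5) + a * z) ^ q = z ^ ((6 * q - 5) * q) + a ^ q * z ^ q := by
      rw [hfrob, mul_pow, ← pow_mul]
    have hz1 : z ^ ((6 * q - 5) * q + (6 * q - 5)) = z ^ (q + 1) := by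
      rw [show (6 * q - 5) * q + (6 * q - 5) = q ^ 2 * 6 + (q - 5) by
        zify [show 5 ≤ 6 * q by omega, show 5 ≤ q by omega]; ring]
      rw [pow_add, pow_mul, hpow z, show q + 1 = 6 + (q - 5) by omega, pow_add]
    calc (z ^ (6 * q - 5) + a * z) ^ q * a * z ^ (6 * q - 5)
        = a * z ^ ((6 * q - 5) * q + (6 * q - 5)) + (a ^ q * a) * z ^ (q + (6 * q - 5)) := by
          rw [hfz, pow_add, pow_add]; ring
      _ = a * z ^ (q + 1) + z ^ (q + (6 * q - 5)) := by rw [hz1, haq, one_mul]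
      _ = z ^ q * (z ^ (6 * q - 5) + a * z) := by rw [pow_add, pow_add]; ring
  -- f(z) = 0 → z = 0
  have hzero : ∀ z : F, z ^ (6 * q - 5) + a * z = 0 → z = 0 := by
    intro z hz
    by_contra hz0
    have h6 : z ^ (6 * q - 5) = a * z := hadd _ _ hz
    have h7 : z ^ (6 * q - 6) * z = a * z := by
      rw [← pow_succ, show 6 * q - 6 + 1 = 6 * q - 5 by omega]; exact h6
    have h8 : z ^ (6 * q - 6) = a := mul_right_cancel₀ hz0 h7
    have h9 : a ^ M = 1 := by
      rw [← h8, ← pow_mul,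
        show (6 * q - 6) * M = (q ^ 2 - 1) * 2 by
          zify [show 6 ≤ 6 * q by omega, show 1 ≤ q ^ 2 by nlinarith]
          linear_combination (2 - 2 * (q : ℤ)) * hMz,
        pow_mul, hpow1 z hz0, one_pow]
    exact h2 h9
  -- injectivity suffices
  rw [← Finite.injective_iff_bijective]
  intro x y hxy
  dsimp only at hxy
  rcases eq_or_ne x 0 with rfl | hx0
  · refine (hzero y ?_).symm
    rw [← hxy, zero_pow (by omega : 6 * q - 5 ≠ 0), mul_zero, add_zero]
  rcases eq_or_ne y 0 with rfl | hy0
  · refine hzero x ?_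
    rw [hxy, zero_pow (by omega : 6 * q - 5 ≠ 0), mul_zero, add_zero]
  obtain ⟨s, hs⟩ : ∃ s, y ^ (6 * q - 5) + a * y = s := ⟨_, rfl⟩
  rw [hs] at hxy
  have hs0 : s ≠ 0 := by rw [← hs]; intro h; exact hy0 (hzero y h)
  have k1 : s ^ q * a * x ^ (6 * q - 5) = x ^ q * s := by
    have := key x; rwa [hxy] at this
  have k2 : s ^ q * a * y ^ (6 * q - 5) = y ^ q * s := by
    have := key y; rwa [hs] at this
  -- cross relation
  have hE : x ^ (6 * q - 5) * y ^ q = y ^ (6 * q - 5) * x ^ q := by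
    have hA : (s ^ q * a) * (x ^ (6 * q - 5) * y ^ q) * s
        = (s ^ q * a) * (y ^ (6 * q - 5) * x ^ q) * s := by
      linear_combination (y ^ q * s) * k1 - (x ^ q * s) * k2
    exact mul_left_cancel₀ (mul_ne_zero (pow_ne_zero q hs0) ha) (mul_right_cancel₀ hs0 hA)
  -- x^(5(q-1)) = y^(5(q-1))
  rw [show 6 * q - 5 = 5 * (q - 1) + q by omega, pow_add, pow_add] at hE
  have hE2 : x ^ (5 * (q - 1)) = y ^ (5 * (q - 1)) := by
    apply mul_right_cancel₀ (mul_ne_zero (pow_ne_zero q hx0) (pow_ne_zero q hy0))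
    linear_combination hE
  -- order argument: x^(q-1) = y^(q-1)
  have hw5 : (x / y) ^ (5 * (q - 1)) = 1 := by
    rw [div_pow, hE2, div_self (pow_ne_zero _ hy0)]
  have hwq : (x / y) ^ ((q + 1) * (q - 1)) = 1 := by
    rw [show (q + 1) * (q - 1) = q ^ 2 - 1 by
      zify [show 1 ≤ q by omega, show 1 ≤ q ^ 2 by nlinarith]; ring]
    exact hpow1 _ (div_ne_zero hx0 hy0)
  have hgcd : Nat.gcd (5 * (q - 1)) ((q + 1) * (q - 1)) = q - 1 := by
    have hco : Nat.gcd 5 (q + 1) = 1 :=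
      (Nat.prime_five.coprime_iff_not_dvd).mpr h5
    rw [Nat.gcd_mul_right, hco, one_mul]
  have hwq1 : (x / y) ^ (q - 1) = 1 := by
    apply orderOf_dvd_iff_pow_eq_one.mp
    rw [← hgcd]
    exact Nat.dvd_gcd (orderOf_dvd_of_pow_eq_one hw5) (orderOf_dvd_of_pow_eq_one hwq)
  have hu : x ^ (q - 1) = y ^ (q - 1) := by
    rw [div_pow] at hwq1
    exact (div_eq_one_iff_eq (pow_ne_zero _ hy0)).mp hwq1
  -- (x^(q-1))^6 + a ≠ 0
  have hne : (x ^ (q - 1)) ^ 6 + a ≠ 0 := by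
    intro h
    have h6 : (x ^ (q - 1)) ^ 6 = a := hadd _ _ h
    apply h2
    rw [← h6, ← pow_mul, ← pow_mul,
      show (q - 1) * (6 * M) = (q ^ 2 - 1) * 2 by
        zify [show 1 ≤ q by omega, show 1 ≤ q ^ 2 by nlinarith]
        linear_combination (2 - 2 * (q : ℤ)) * hMz,
      pow_mul, hpow1 x hx0, one_pow]
  -- conclude
  have hfx : x ^ (6 * q - 5) + a * x = x * ((x ^ (q - 1)) ^ 6 + a) := by
    rw [← pow_mul, mul_add,
      show x * x ^ ((q - 1) * 6) = x ^ (6 * q - 5) by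
        rw [← pow_succ', show (q - 1) * 6 + 1 = 6 * q - 5 by omega]]
    ring
  have hfy : y ^ (6 * q - 5) + a * y = y * ((y ^ (q - 1)) ^ 6 + a) := by
    rw [← pow_mul, mul_add,
      show y * y ^ ((q - 1) * 6) = y ^ (6 * q - 5) by
        rw [← pow_succ', show (q - 1) * 6 + 1 = 6 * q - 5 by omega]]
    ring
  have hfinal : x * ((x ^ (q - 1)) ^ 6 + a) = y * ((x ^ (q - 1)) ^ 6 + a) := by
    rw [← hfx, hu, ← hfy, hxy, hs]
  exact mul_right_cancel₀ hne hfinal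
end

section
/- Let q = 2^n with n ≥ 3 odd and a ∈ μ_{q+1} with a ∉ μ_{(q+1)/3}. Then for every x ∈ μ_{q+1} (the (q+1)-st roots of unity in F_{q^2}), x^6 + a ≠ 0 and x·(x^6 + a)^{q-1} = a^{-1}·x^{-5}. -/
theorem stmt1 (n : ℕ) (hn : Odd n) (hn3 : 3 ≤ n)
    (F : Type*) [Field F] [Fintype F] (hF : Fintype.card F = (2 ^ n) ^ 2)
    (a : F) (ha1 : a ^ (2 ^ n + 1) = 1) (ha2 : a ^ ((2 ^ n + 1) / 3) ≠ 1)
    (x : F) (hx : x ^ (2 ^ n + 1) = 1) :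
    x ^ 6 + a ≠ 0 ∧ x * (x ^ 6 + a) ^ (2 ^ n - 1) = a⁻¹ * (x ^ 5)⁻¹ := by
  have hx0 : x ≠ 0 := by
    intro h; rw [h, zero_pow (by positivity)] at hx; exact zero_ne_one hx
  have ha0 : a ≠ 0 := by
    intro h; rw [h, zero_pow (by positivity)] at ha1; exact zero_ne_one ha1
  -- characteristic 2
  haveI : Fact (Nat.Prime 2) := ⟨Nat.prime_two⟩
  have hchar : CharP F 2 := by
    obtain ⟨p, hpi⟩ := CharP.exists F
    haveI := hpi
    have hp : p.Prime := CharP.char_is_prime F p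
    obtain ⟨m, hm⟩ := FiniteField.card F p
    have hdvd : p ∣ 2 ^ n * 2 ^ n := by
      rw [← sq, ← hF, hm.2]
      exact dvd_pow_self p m.2.ne'
    have : p ∣ 2 := hp.dvd_of_dvd_pow (by rwa [← pow_add] at hdvd)
    have : p = 2 := (Nat.prime_dvd_prime_iff_eq hp Nat.prime_two).mp this
    rwa [this] at hpi
  haveI := hchar
  -- 3 divides 2^n + 1
  have h3 : 3 ∣ 2 ^ n + 1 := by
    have : ((2 ^ n + 1 : ℕ) : ZMod 3) = 0 := by
      push_cast
      rw [show ((2 : ZMod 3)) = -1 by decide, hn.neg_one_pow]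
      ring
    exact (ZMod.natCast_eq_zero_iff _ _).mp this
  obtain ⟨k, hk⟩ := h3
  have hne : x ^ 6 + a ≠ 0 := by
    intro h
    have ha6 : a = x ^ 6 := by
      have := eq_neg_of_add_eq_zero_right h
      rwa [CharTwo.neg_eq] at this
    apply ha2
    rw [ha6, hk, Nat.mul_div_cancel_left k (by norm_num), ← pow_mul,
      show 6 * k = (3 * k) * 2 by ring, pow_mul, ← hk, hx, one_pow]
  refine ⟨hne, ?_⟩
  -- x^q = x⁻¹, a^q = a⁻¹
  have hxq : x ^ 2 ^ n = x⁻¹ := by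
    rw [pow_succ] at hx
    exact eq_inv_of_mul_eq_one_left hx
  have haq : a ^ 2 ^ n = a⁻¹ := by
    rw [pow_succ] at ha1
    exact eq_inv_of_mul_eq_one_left ha1
  have hfrob : (x ^ 6 + a) ^ 2 ^ n = (x⁻¹) ^ 6 + a⁻¹ := by
    rw [add_pow_char_pow, ← pow_mul, mul_comm 6, pow_mul, hxq, haq]
  rw [pow_sub₀ _ hne Nat.one_le_two_pow, hfrob, pow_one]
  field_simp
  ring
end

section
/- Let q = 2^n with n even, and a ∈ F_{q^3}^*. If a^{q^2+q+1} = 1 and a^{(q^2+q+1)/3} ≠ 1, then the map x ↦ x^{(q^2+q)/2} + a·x is a bijection of F_{q^3}. -/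
/-!
Squaring turns `x ^ ((q ^ 2 + q) / 2)` into `x ^ q ^ 2 * x ^ q`, a product of Frobenius
conjugates. So a collision `x ≠ y` of `x ↦ x ^ ((q ^ 2 + q) / 2) + a x` gives, for `s = x + y`
and `z = y / s`, the relation `u · N(s) = a² s³` with `u = 1 + z ^ q + z ^ (q ^ 2)`, an element
of trace `1` over `𝔽_q`. Raising to `D = (q ^ 2 + q + 1) / 3` kills the norm, so `u ^ D = ω²`
where `ω = a ^ D` is a primitive cube root of unity. Then `ω u = w³` with `N(w) = 1` and
`Tr(w³) = ω`. By Newton's identities in characteristic `2`, `ω · Tr(w)` is a root of the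
characteristic polynomial of `w` over `𝔽_q`, so `w ∈ 𝔽_q`, whence `w³ = N(w) = 1` and
`ω = Tr(1) = 1`, a contradiction.
-/

theorem CharTwo.prod_mul_sum_add_eq_zero {R : Type*} [CommRing R] [CharP R 2] {w₁ w₂ w₃ c : R}
    (hN : w₁ * w₂ * w₃ = 1) (hc : c ^ 2 + c + 1 = 0) (hp : w₁ ^ 3 + w₂ ^ 3 + w₃ ^ 3 = c) :
    (c * (w₁ + w₂ + w₃) + w₁) * (c * (w₁ + w₂ + w₃) + w₂) * (c * (w₁ + w₂ + w₃) + w₃) = 0 := by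
  linear_combination c * hp + (c * (w₁ + w₂ + w₃) ^ 3 + 1) * hc + (1 - 3 * c) * hN +
    (-c * (w₁ + w₂ + w₃) ^ 3 + 2 * c * (w₁ + w₂ + w₃) * (w₁ * w₂ + w₁ * w₃ + w₂ * w₃) - 2 * c) *
      CharTwo.two_eq_zero (R := R)

theorem pow_mul_add_one_eq_self {M : Type*} [Monoid M] {x : M} {k : ℕ} (h : x ^ (k + 1) = x) :
    ∀ j : ℕ, x ^ (k * j + 1) = x
  | 0 => by simp
  | j + 1 => by
    rw [mul_add_one, add_right_comm, pow_add, pow_mul_add_one_eq_self h j, ← pow_succ', h]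

theorem Nat.sq_add_add_one_div_three (r : ℕ) :
    ((3 * r + 1) ^ 2 + (3 * r + 1) + 1) / 3 = 3 * (r * (r + 1)) + 1 := by
  rw [show (3 * r + 1) ^ 2 + (3 * r + 1) + 1 = 3 * (3 * (r * (r + 1)) + 1) by ring]
  exact Nat.mul_div_cancel_left _ three_pos

theorem sq_add_self_add_one_eq_zero {K : Type*} [Field K] {b : K} (h3 : b ^ 3 = 1) (h1 : b ≠ 1) :
    b ^ 2 + b + 1 = 0 := by
  have : (b - 1) * (b ^ 2 + b + 1) = 0 := by linear_combination h3
  exact (mul_eq_zero.mp this).resolve_left (sub_ne_zero.mpr h1)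

section CubicFrobenius

variable {F : Type*} [Field F] (φ : F →+* F) {q : ℕ}

def cubicTrace (x : F) : F := x + φ x + φ (φ x)

def cubicNorm (x : F) : F := x * φ x * φ (φ x)

variable {φ}

theorem map_cubicTrace (hφ3 : ∀ x, φ (φ (φ x)) = x) (x : F) :
    φ (cubicTrace φ x) = cubicTrace φ x := by
  simp only [cubicTrace, map_add, hφ3]
  ring

theorem map_cubicNorm (hφ3 : ∀ x, φ (φ (φ x)) = x) (x : F) :
    φ (cubicNorm φ x) = cubicNorm φ x := by
  simp only [cubicNorm, map_mul, hφ3]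
  ring

theorem cubicTrace_mul_of_map_eq {c : F} (hc : φ c = c) (x : F) :
    cubicTrace φ (c * x) = c * cubicTrace φ x := by
  simp only [cubicTrace, map_mul, hc]
  ring

theorem cubicNorm_eq_pow (hφ : ∀ x, φ x = x ^ q) (x : F) :
    cubicNorm φ x = x ^ (q ^ 2 + q + 1) := by
  rw [cubicNorm, hφ, hφ, ← pow_mul, pow_add, pow_add, pow_one]
  ring

theorem pow_div_three_eq_of_mul_cubicNorm_eq (hφ : ∀ x, φ x = x ^ q)
    (hφ3 : ∀ x, φ (φ (φ x)) = x) (hq : q % 3 = 1) {u b s : F} (hs : s ≠ 0)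
    (h : u * cubicNorm φ s = b * s ^ 3) :
    u ^ ((q ^ 2 + q + 1) / 3) = b ^ ((q ^ 2 + q + 1) / 3) := by
  obtain ⟨r, rfl⟩ : ∃ r, q = 3 * r + 1 := ⟨q / 3, by omega⟩
  rw [Nat.sq_add_add_one_div_three]
  have hN0 : cubicNorm φ s ≠ 0 := by simp [cubicNorm, hs]
  have hND : cubicNorm φ s ^ (3 * (r * (r + 1)) + 1) = cubicNorm φ s := by
    rw [← mul_assoc]
    exact pow_mul_add_one_eq_self (by rw [← hφ, map_cubicNorm hφ3]) _
  have hsD : (s ^ 3) ^ (3 * (r * (r + 1)) + 1) = cubicNorm φ s := by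
    rw [← pow_mul, show 3 * (3 * (r * (r + 1)) + 1) = (3 * r + 1) ^ 2 + (3 * r + 1) + 1 by ring,
      ← cubicNorm_eq_pow hφ]
  have := congrArg (· ^ (3 * (r * (r + 1)) + 1)) h
  simp only [mul_pow, hND, hsD] at this
  exact mul_right_cancel₀ hN0 this

variable [CharP F 2]

variable (φ) in
theorem map_map_mul_map_add_eq (s z : F) :
    φ (φ ((1 + z) * s)) * φ ((1 + z) * s) + φ (φ (z * s)) * φ (z * s) =
      (1 + φ z + φ (φ z)) * (φ (φ s) * φ s) := by
  simp only [map_mul, map_add, map_one]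
  linear_combination φ (φ z) * φ z * φ (φ s) * φ s * CharTwo.two_eq_zero (R := F)

theorem cubicTrace_one_add_map_add_map_map (hφ3 : ∀ x, φ (φ (φ x)) = x) (z : F) :
    cubicTrace φ (1 + φ z + φ (φ z)) = 1 := by
  simp only [cubicTrace, map_add, map_one, hφ3]
  linear_combination (1 + z + φ z + φ (φ z)) * CharTwo.two_eq_zero (R := F)

theorem exists_cubicTrace_eq_one_of_pow_add_mul_eq (hφ : ∀ x, φ x = x ^ q)
    (hφ3 : ∀ x, φ (φ (φ x)) = x) {E : ℕ} (hE : 2 * E = q ^ 2 + q) {a x y : F} (hxy : x ≠ y)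
    (h : x ^ E + a * x = y ^ E + a * y) :
    ∃ u s : F, s ≠ 0 ∧ cubicTrace φ u = 1 ∧ u * cubicNorm φ s = a ^ 2 * s ^ 3 := by
  have hsq (x : F) : (x ^ E) ^ 2 = φ (φ x) * φ x := by
    rw [← pow_mul, mul_comm, hE, hφ, hφ, ← pow_mul, ← sq, pow_add]
  have h2 := congrArg (· ^ 2) h
  simp only [CharTwo.add_sq, mul_pow, hsq] at h2
  set s := x + y with hs_def
  have hs : s ≠ 0 := fun h0 => hxy (CharTwo.add_eq_zero.mp h0)
  set z := y / s
  have hy : y = z * s := (div_mul_cancel₀ y hs).symm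
  have hx : x = (1 + z) * s := by linear_combination hy - hs_def - y * CharTwo.two_eq_zero (R := F)
  refine ⟨_, s, hs, cubicTrace_one_add_map_add_map_map hφ3 z, ?_⟩
  have key := map_map_mul_map_add_eq φ s z
  rw [hx, hy] at h2
  rw [cubicNorm]
  linear_combination -s * key + s * h2 + (s * (φ (φ (z * s)) * φ (z * s)) - a ^ 2 * s ^ 3 -
    a ^ 2 * s ^ 3 * z) * CharTwo.two_eq_zero (R := F)

theorem cubicTrace_pow_three_ne (hφ3 : ∀ x, φ (φ (φ x)) = x) {w c : F}
    (hw : cubicNorm φ w = 1) (hc : c ^ 2 + c + 1 = 0) (hφc : φ c = c) :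
    cubicTrace φ (w ^ 3) ≠ c := by
  intro hp
  set P := c * cubicTrace φ w
  have hP : φ P = P := by rw [map_mul, hφc, map_cubicTrace hφ3]
  -- `P` is a root of the characteristic polynomial of `w`, i.e. a conjugate of `w`;
  -- being fixed by `φ`, it is `w` itself.
  have hroot : (P + w) * (P + φ w) * (P + φ (φ w)) = 0 :=
    CharTwo.prod_mul_sum_add_eq_zero hw hc (by simpa only [cubicTrace, map_pow] using hp)
  have hwP : w = P := by
    simp only [mul_eq_zero, CharTwo.add_eq_zero] at hroot
    rcases hroot with (h | h) | h
    · exact h.symm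
    · rw [← hφ3 w, ← h, hP, hP]
    · rw [← hφ3 w, ← h, hP]
  rw [← hwP] at hP
  simp only [cubicNorm, cubicTrace, map_pow, hP] at hw hp
  have hc1 : c = 1 := by linear_combination -hp + 3 * hw + CharTwo.two_eq_zero (R := F)
  subst hc1
  exact one_ne_zero (by linear_combination hc - CharTwo.two_eq_zero (R := F))

theorem pow_div_three_ne_of_cubicTrace_eq_one (hφ : ∀ x, φ x = x ^ q)
    (hφ3 : ∀ x, φ (φ (φ x)) = x) (hq : q % 3 = 1) {u b : F} (hu : cubicTrace φ u = 1)
    (hb : b ^ 2 + b + 1 = 0) :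
    u ^ ((q ^ 2 + q + 1) / 3) ≠ b ^ 2 := by
  obtain ⟨r, rfl⟩ : ∃ r, q = 3 * r + 1 := ⟨q / 3, by omega⟩
  rw [Nat.sq_add_add_one_div_three]
  intro huD
  have hb3 : b ^ 3 = 1 := by linear_combination (b - 1) * hb
  have hb4 : b ^ (3 + 1) = b := by rw [pow_succ, hb3, one_mul]
  have hφb : φ b = b := by rw [hφ, pow_mul_add_one_eq_self hb4]
  set v := b * u
  have hvD : v ^ (3 * (r * (r + 1)) + 1) = 1 := by
    rw [mul_pow, huD, pow_mul_add_one_eq_self hb4, ← pow_succ', hb3]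
  -- `w = v ^ ((2D + 1) / 3)` is a cube root of `v`, of norm `v ^ D = 1`.
  set w := v ^ (2 * (r * (r + 1)) + 1)
  have hw3 : w ^ 3 = v := by
    rw [← pow_mul, show (2 * (r * (r + 1)) + 1) * 3 = 2 * (3 * (r * (r + 1)) + 1) + 1 by ring,
      pow_succ, pow_mul', hvD, one_pow, one_mul]
  have hwN : cubicNorm φ w = 1 := by
    rw [cubicNorm_eq_pow hφ, show (3 * r + 1) ^ 2 + (3 * r + 1) + 1 =
      3 * (3 * (r * (r + 1)) + 1) by ring, pow_mul, hw3, hvD]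
  refine cubicTrace_pow_three_ne hφ3 hwN hb hφb ?_
  rw [hw3, cubicTrace_mul_of_map_eq hφb, hu, mul_one]

end CubicFrobenius

theorem stmt5_general (n : ℕ) (hn : Even n) (h0 : 0 < n)
    (F : Type*) [Field F] [Fintype F] (hF : Fintype.card F = (2 ^ n) ^ 3)
    (a : F)
    (h1 : a ^ ((2 ^ n) ^ 2 + 2 ^ n + 1) = 1)
    (h2 : a ^ (((2 ^ n) ^ 2 + 2 ^ n + 1) / 3) ≠ 1) :
    Function.Bijective (fun x : F => x ^ (((2 ^ n) ^ 2 + 2 ^ n) / 2) + a * x) := by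
  have hq : 2 ^ n % 3 = 1 := by
    obtain ⟨m, rfl⟩ := hn
    rw [← two_mul, pow_mul, Nat.pow_mod]
    norm_num
  have : Fact (Nat.Prime 2) := ⟨Nat.prime_two⟩
  have : CharP F 2 := charP_of_card_eq_prime_pow (by rw [hF, ← pow_mul])
  set q := 2 ^ n
  set φ := iterateFrobenius F 2 n
  have hφ (x : F) : φ x = x ^ q := iterateFrobenius_def ..
  have hφ3 (x : F) : φ (φ (φ x)) = x := by
    rw [hφ, hφ, hφ, ← pow_mul, ← pow_mul, show q * (q * q) = Fintype.card F by rw [hF]; ring,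
      FiniteField.pow_card]
  have hE : 2 * ((q ^ 2 + q) / 2) = q ^ 2 + q :=
    Nat.mul_div_cancel' ((dvd_pow (dvd_pow_self 2 h0.ne') two_ne_zero).add (dvd_pow_self 2 h0.ne'))
  have hD : (q ^ 2 + q + 1) / 3 * 3 = q ^ 2 + q + 1 :=
    Nat.div_mul_cancel (Nat.dvd_of_mod_eq_zero (by simp [Nat.add_mod, Nat.pow_mod, hq]))
  have hω := sq_add_self_add_one_eq_zero (by rw [← pow_mul, hD, h1]) h2
  refine Finite.injective_iff_bijective.mp fun x y hxy => by_contra fun hne => ?_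
  obtain ⟨u, s, hs, hu, hus⟩ := exists_cubicTrace_eq_one_of_pow_add_mul_eq hφ hφ3 hE hne hxy
  exact pow_div_three_ne_of_cubicTrace_eq_one hφ hφ3 hq hu hω
    ((pow_div_three_eq_of_mul_cubicNorm_eq hφ hφ3 hq hs hus).trans (pow_right_comm _ _ _))

theorem stmt5 (n : ℕ) (hn : Even n) (h0 : 0 < n)
    (F : Type*) [Field F] [Fintype F] (hF : Fintype.card F = (2 ^ n) ^ 3)
    (a : F) (ha : a ≠ 0)
    (h1 : a ^ ((2 ^ n) ^ 2 + 2 ^ n + 1) = 1)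
    (h2 : a ^ (((2 ^ n) ^ 2 + 2 ^ n + 1) / 3) ≠ 1) :
    Function.Bijective (fun x : F => x ^ (((2 ^ n) ^ 2 + 2 ^ n) / 2) + a * x) :=
  stmt5_general n hn h0 F hF a h1 h2
end

section
/- Let q = 2^n with n even, and a ∈ F_{q^3}^*. If the map x ↦ x^{(q^2+q)/2} + a·x permutes F_{q^3}, then a^{q^2+q+1} = 1 and a^{(q^2+q+1)/3} ≠ 1. -/
/-!
Write `q = 2 ^ n`. Precomposing with the Frobenius `y ↦ y ^ 2`, the map
`G y = a * y ^ 2 + y ^ (q ^ 2 + q)` permutes `F`, so by Hermite's criterion `∑ y, G y ^ k = 0` for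
`k = (q - 1) * (2 * q + 1) < q ^ 3 - 1`. In characteristic 2, `(u + v) ^ (q - 1)` is the sum of all
`u ^ i * v ^ (q - 1 - i)` with `i < q`, and `k = (q - 1) + 2 * q * (q - 1)`, so this power sum is
`∑ i j, a ^ (i + 2 * q * j) * ∑ y, y ^ E(i, j)` with `i, j < q`; the inner sum is `-1` or `0` according
as `q ^ 3 - 1` divides `E(i, j)` or not. Writing `q = 6 * w + 4`, exactly three pairs `(i, j)` survive,
with `i + 2 * q * j = e, e + M, e + 2 * M` where `M = (q ^ 2 + q + 1) / 3`. Hence `1 + b + b ^ 2 = 0`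
for `b = a ^ M`, which makes `b` a primitive cube root of unity in characteristic 2.
-/

open Finset

theorem Nat.two_pow_mod_six_of_even {n : ℕ} (hn : Even n) (h0 : 0 < n) : 2 ^ n % 6 = 4 := by
  obtain ⟨m, rfl⟩ := hn
  induction m with
  | zero => omega
  | succ m ih =>
    rcases Nat.eq_zero_or_pos m with rfl | hm
    · norm_num
    rw [show m + 1 + (m + 1) = m + m + 2 by ring, pow_add]
    have := ih (by omega)
    omega

theorem Nat.sub_one_mul_two_mul_add_one_lt {q : ℕ} (hq : 2 ≤ q) :
    (q - 1) * (2 * q + 1) < q ^ 3 - 1 := by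
  obtain ⟨r, rfl⟩ : ∃ r, q = r + 2 := ⟨q - 2, by omega⟩
  rw [show r + 2 - 1 = r + 1 by omega]
  have : (r + 1) * (2 * (r + 2) + 1) + 1 < (r + 2) ^ 3 := by
    ring_nf; nlinarith [sq_nonneg r, pow_nonneg (Nat.zero_le r) 3]
  omega

theorem CharTwo.pow_three_eq_one_and_ne_one {R : Type*} [CommRing R] [CharP R 2] [Nontrivial R]
    {b : R} (h : 1 + b + b ^ 2 = 0) : b ^ 3 = 1 ∧ b ≠ 1 := by
  refine ⟨by linear_combination (b - 1) * h, ?_⟩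
  rintro rfl
  exact one_ne_zero (by linear_combination h - CharTwo.two_eq_zero (R := R))

theorem FiniteField.sum_pow_of_ne_zero {K : Type*} [Field K] [Fintype K] [DecidableEq K]
    {i : ℕ} (hi : i ≠ 0) :
    ∑ x : K, x ^ i = if Fintype.card K - 1 ∣ i then -1 else 0 := by
  rw [← FiniteField.sum_pow_units K i, ← sum_erase univ (zero_pow hi)]
  symm
  exact sum_bij (fun u _ => (u : K)) (by simp) (fun _ _ _ _ => Units.ext)
    (fun x hx => ⟨Units.mk0 x (ne_of_mem_erase hx), mem_univ _, rfl⟩) (by simp)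

theorem add_pow_two_pow_sub_one {R : Type*} [CommSemiring R] [CharP R 2] (x y : R) (N : ℕ) :
    (x + y) ^ (2 ^ N - 1) = ∑ i ∈ range (2 ^ N), x ^ i * y ^ (2 ^ N - 1 - i) := by
  induction N with
  | zero => simp
  | succ N ih =>
    have hN : 2 ^ (N + 1) - 1 = (2 ^ N - 1) + 2 ^ N := by
      have := Nat.one_le_two_pow (n := N); rw [pow_succ]; omega
    rw [hN, pow_add, ih, add_pow_char_pow, mul_add, sum_mul, sum_mul, pow_succ, mul_two,
      sum_range_add, add_comm]
    congr 1 <;> refine sum_congr rfl fun i hi => ?_ <;> have := mem_range.1 hi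
    · rw [show 2 ^ N - 1 + 2 ^ N - i = (2 ^ N - 1 - i) + 2 ^ N by omega, pow_add]; ring
    · rw [show 2 ^ N - 1 + 2 ^ N - (2 ^ N + i) = 2 ^ N - 1 - i by omega, pow_add]; ring

theorem add_pow_two_pow_sub_one_mul_eq_sum_sum {R : Type*} [CommSemiring R] [CharP R 2]
    (x y : R) (N : ℕ) :
    (x + y) ^ ((2 ^ N - 1) * (2 * 2 ^ N + 1)) = ∑ i ∈ range (2 ^ N), ∑ j ∈ range (2 ^ N),
      x ^ (i + 2 * 2 ^ N * j) * y ^ (2 ^ N - 1 - i + 2 * 2 ^ N * (2 ^ N - 1 - j)) := by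
  have hfrob : (x + y) ^ (2 * 2 ^ N) = x ^ (2 * 2 ^ N) + y ^ (2 * 2 ^ N) := by
    rw [← pow_succ']; exact add_pow_char_pow x y 2 (N + 1)
  rw [show (2 ^ N - 1) * (2 * 2 ^ N + 1) = (2 ^ N - 1) + (2 ^ N - 1) * (2 * 2 ^ N) by ring,
    pow_add, pow_mul', hfrob, add_pow_two_pow_sub_one,
    add_pow_two_pow_sub_one, sum_mul_sum]
  refine sum_congr rfl fun i _ => sum_congr rfl fun j _ => ?_
  ring

theorem Nat.eq_and_eq_of_add_mul_eq_add_mul {m i j c d : ℕ} (hi : i < m) (hc : c < m)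
    (h : i + m * j = c + m * d) : i = c ∧ j = d := by
  have hm : 0 < m := by omega
  have hcd := (Nat.div_mod_unique hm).2 ⟨h.symm, hc⟩
  have hij := (Nat.div_mod_unique (d := j) hm).2 ⟨rfl, hi⟩
  exact ⟨hij.2.symm.trans hcd.2, hij.1.symm.trans hcd.1⟩

/-- The exponent of `y` in the `(i, j)` term of the expansion of
`(a * y ^ 2 + y ^ (q ^ 2 + q)) ^ ((q - 1) * (2 * q + 1))` given by
`add_pow_two_pow_sub_one_mul_eq_sum_sum`. -/
def expansionExponent (q i j : ℕ) : ℕ :=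
  2 * (i + 2 * q * j) + (q ^ 2 + q) * (q - 1 - i + 2 * q * (q - 1 - j))

theorem expansionExponent_ne_zero {q : ℕ} (hq : 2 ≤ q) (i j : ℕ) :
    expansionExponent q i j ≠ 0 := by
  simp only [expansionExponent, ne_eq, Nat.add_eq_zero_iff, mul_eq_zero, OfNat.ofNat_ne_zero,
    false_or, Nat.pow_eq_zero, not_and, not_or]
  omega

section
variable {q w : ℕ}

theorem dvd_expansionExponent_iff (hq : q = 6 * w + 4) {i j : ℕ} (hi : i < q) (hj : j < q) :
    q ^ 3 - 1 ∣ expansionExponent q i j ↔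
      i + 2 * q * j ≡ 12 * w ^ 2 + 12 * w + 2 [MOD 12 * w ^ 2 + 18 * w + 7] := by
  subst hq
  rw [Nat.modEq_iff_dvd, ← Int.natCast_dvd_natCast]
  have hcard : (((6 * w + 4) ^ 3 - 1 : ℕ) : ℤ) = 9 * (2 * w + 1) * (12 * w ^ 2 + 18 * w + 7) := by
    rw [Nat.cast_sub (Nat.one_le_pow _ _ (by omega))]; push_cast; ring
  have hE : (expansionExponent (6 * w + 4) i j : ℤ) = 9 * (2 * w + 1) *
      ((12 * w ^ 2 + 18 * w + 7) * (10 * w + 8) +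
        2 * (w + 1) * ((12 * w ^ 2 + 12 * w + 2 : ℕ) - (i + 2 * (6 * w + 4) * j : ℕ))) := by
    simp only [expansionExponent, Nat.cast_add, Nat.cast_mul, Nat.cast_pow, Nat.cast_ofNat,
      Nat.cast_sub (show i ≤ 6 * w + 4 - 1 by omega), Nat.cast_sub (show j ≤ 6 * w + 4 - 1 by omega),
      Nat.cast_sub (show 1 ≤ 6 * w + 4 by omega), Nat.cast_one]
    ring
  -- `E = (q ^ 2 + q) * k - (q - 1) * (q + 2) * e` with `e = i + 2 * q * j`; cancelling the factor
  -- `9 * (2 * w + 1)` of `q ^ 3 - 1 = 9 * (2 * w + 1) * M` leaves `M ∣ 2 * (w + 1) * (e₀ - e)`.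
  have hcop : IsCoprime (12 * (w : ℤ) ^ 2 + 18 * w + 7) (2 * ((w : ℤ) + 1)) :=
    ⟨1, -(6 * w + 3), by ring⟩
  rw [hcard, hE, mul_dvd_mul_iff_left (by positivity), dvd_add_right (dvd_mul_right _ _)]
  push_cast
  exact ⟨hcop.dvd_of_dvd_mul_left, fun h => dvd_mul_of_dvd_right h _⟩

theorem add_two_mul_mul_modEq_iff (hq : q = 6 * w + 4) {i j : ℕ} (hi : i < q) (hj : j < q) :
    i + 2 * q * j ≡ 12 * w ^ 2 + 12 * w + 2 [MOD 12 * w ^ 2 + 18 * w + 7] ↔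
      i = 4 * w + 2 ∧ j = w ∨ i = 2 * w + 1 ∧ j = 2 * w + 1 ∨ i = 0 ∧ j = 3 * w + 2 := by
  subst hq
  constructor
  · intro h
    have hmod : (i + 2 * (6 * w + 4) * j) % (12 * w ^ 2 + 18 * w + 7) = 12 * w ^ 2 + 12 * w + 2 := by
      unfold Nat.ModEq at h
      rw [h]
      exact Nat.mod_eq_of_lt (by nlinarith)
    have hdiv := Nat.div_add_mod (i + 2 * (6 * w + 4) * j) (12 * w ^ 2 + 18 * w + 7)
    rw [hmod] at hdiv
    set t := (i + 2 * (6 * w + 4) * j) / (12 * w ^ 2 + 18 * w + 7)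
    have ht : t < 5 := by
      by_contra! ht
      nlinarith
    have key : ∀ c d, c < 2 * (6 * w + 4) →
        (12 * w ^ 2 + 18 * w + 7) * t + (12 * w ^ 2 + 12 * w + 2) = c + 2 * (6 * w + 4) * d →
        i = c ∧ j = d := fun c d hc hcd =>
      Nat.eq_and_eq_of_add_mul_eq_add_mul (by omega) hc (by rw [← hcd, hdiv])
    -- For `t = 3, 4` the low part `i` of `i + 2 * q * j` would exceed `q`.
    interval_cases t
    · have := key (4 * w + 2) w (by omega) (by ring); omega
    · have := key (2 * w + 1) (2 * w + 1) (by omega) (by ring); omega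
    · have := key 0 (3 * w + 2) (by omega) (by ring); omega
    · have := key (10 * w + 7) (4 * w + 2) (by omega) (by ring); omega
    · have := key (8 * w + 6) (5 * w + 3) (by omega) (by ring); omega
  · rintro (⟨hi, hj⟩ | ⟨hi, hj⟩ | ⟨hi, hj⟩) <;> rw [hi, hj, Nat.ModEq]
    · rw [show 4 * w + 2 + 2 * (6 * w + 4) * w = 12 * w ^ 2 + 12 * w + 2 by ring]
    · rw [show 2 * w + 1 + 2 * (6 * w + 4) * (2 * w + 1) =
        12 * w ^ 2 + 12 * w + 2 + (12 * w ^ 2 + 18 * w + 7) * 1 by ring, Nat.add_mul_mod_self_left]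
    · rw [show 0 + 2 * (6 * w + 4) * (3 * w + 2) =
        12 * w ^ 2 + 12 * w + 2 + (12 * w ^ 2 + 18 * w + 7) * 2 by ring, Nat.add_mul_mod_self_left]

theorem filter_dvd_expansionExponent (hq : q = 6 * w + 4) :
    {p ∈ range q ×ˢ range q | q ^ 3 - 1 ∣ expansionExponent q p.1 p.2} =
      {(4 * w + 2, w), (2 * w + 1, 2 * w + 1), (0, 3 * w + 2)} := by
  ext ⟨i, j⟩
  simp only [mem_filter, mem_product, mem_range, mem_insert, mem_singleton, Prod.mk.injEq]
  constructor
  · rintro ⟨⟨hi, hj⟩, hdvd⟩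
    exact (add_two_mul_mul_modEq_iff hq hi hj).1 ((dvd_expansionExponent_iff hq hi hj).1 hdvd)
  · intro hij
    have hi : i < q := by omega
    have hj : j < q := by omega
    exact ⟨⟨hi, hj⟩, (dvd_expansionExponent_iff hq hi hj).2 ((add_two_mul_mul_modEq_iff hq hi hj).2 hij)⟩

end

theorem sum_mul_sq_add_pow_pow_eq {F : Type*} [Field F] [Fintype F] [CharP F 2] {n w : ℕ}
    (hw : 2 ^ n = 6 * w + 4) (hF : Fintype.card F = (2 ^ n) ^ 3) (a : F) :
    ∑ y : F, (a * y ^ 2 + y ^ ((2 ^ n) ^ 2 + 2 ^ n)) ^ ((2 ^ n - 1) * (2 * 2 ^ n + 1)) =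
      -(a ^ (12 * w ^ 2 + 12 * w + 2) *
        (1 + a ^ (12 * w ^ 2 + 18 * w + 7) + (a ^ (12 * w ^ 2 + 18 * w + 7)) ^ 2)) := by
  classical
  simp only [add_pow_two_pow_sub_one_mul_eq_sum_sum]
  set q := 2 ^ n with hq
  have hterm : ∀ (y : F) (i j : ℕ), (a * y ^ 2) ^ (i + 2 * q * j) *
      (y ^ (q ^ 2 + q)) ^ (q - 1 - i + 2 * q * (q - 1 - j)) =
        a ^ (i + 2 * q * j) * y ^ expansionExponent q i j := by
    intro y i j
    rw [expansionExponent, mul_pow, ← pow_mul, ← pow_mul, pow_add]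
    ring
  calc ∑ y : F, ∑ i ∈ range q, ∑ j ∈ range q, (a * y ^ 2) ^ (i + 2 * q * j) *
        (y ^ (q ^ 2 + q)) ^ (q - 1 - i + 2 * q * (q - 1 - j))
      = ∑ p ∈ range q ×ˢ range q,
          a ^ (p.1 + 2 * q * p.2) * ∑ y : F, y ^ expansionExponent q p.1 p.2 := by
        simp only [hterm, mul_sum]
        rw [sum_product, sum_comm]
        exact sum_congr rfl fun _ _ => sum_comm
    _ = ∑ p ∈ range q ×ˢ range q,
          if q ^ 3 - 1 ∣ expansionExponent q p.1 p.2 then -a ^ (p.1 + 2 * q * p.2) else 0 := by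
        refine sum_congr rfl fun p _ => ?_
        rw [FiniteField.sum_pow_of_ne_zero (expansionExponent_ne_zero (by omega) _ _), hF,
          mul_ite, mul_neg_one, mul_zero]
    _ = -∑ p ∈ {(4 * w + 2, w), (2 * w + 1, 2 * w + 1), (0, 3 * w + 2)},
          a ^ (p.1 + 2 * q * p.2) := by
        rw [← filter_dvd_expansionExponent hw, sum_ite, sum_const_zero, add_zero, sum_neg_distrib]
    _ = _ := by
        rw [sum_insert (by simp only [mem_insert, mem_singleton, Prod.mk.injEq]; omega),
          sum_insert (by simp only [mem_singleton, Prod.mk.injEq]; omega), sum_singleton, hw]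
        ring

theorem stmt6 (n : ℕ) (hn : Even n) (h0 : 0 < n)
    (F : Type*) [Field F] [Fintype F] (hF : Fintype.card F = (2 ^ n) ^ 3)
    (a : F) (ha : a ≠ 0)
    (h : Function.Bijective (fun x : F => x ^ (((2 ^ n) ^ 2 + 2 ^ n) / 2) + a * x)) :
    a ^ ((2 ^ n) ^ 2 + 2 ^ n + 1) = 1 ∧ a ^ (((2 ^ n) ^ 2 + 2 ^ n + 1) / 3) ≠ 1 := by
  obtain ⟨w, hw⟩ : ∃ w, 2 ^ n = 6 * w + 4 :=
    ⟨2 ^ n / 6, by have := Nat.two_pow_mod_six_of_even hn h0; omega⟩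
  have : CharP F 2 := ringChar.of_eq <| FiniteField.even_card_iff_char_two.2 <| hF ▸
    Nat.even_iff.1 (Nat.even_pow.2 ⟨Nat.even_pow.2 ⟨even_two, h0.ne'⟩, three_ne_zero⟩)
  have hG : Function.Bijective fun y : F => a * y ^ 2 + y ^ ((2 ^ n) ^ 2 + 2 ^ n) := by
    convert h.comp (bijective_frobenius F 2) using 1
    funext y
    have heven : 2 ∣ (2 ^ n) ^ 2 + 2 ^ n := by
      rw [sq, ← mul_add_one]; exact (Nat.even_mul_succ_self _).two_dvd
    rw [Function.comp_apply, frobenius_def, ← pow_mul y 2, Nat.mul_div_cancel' heven, add_comm]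
  have hdeg : (2 ^ n - 1) * (2 * 2 ^ n + 1) < Fintype.card F - 1 :=
    hF ▸ Nat.sub_one_mul_two_mul_add_one_lt (by omega)
  have hb : 1 + a ^ (12 * w ^ 2 + 18 * w + 7) + (a ^ (12 * w ^ 2 + 18 * w + 7)) ^ 2 = 0 := by
    have hsum := hG.sum_comp (· ^ ((2 ^ n - 1) * (2 * 2 ^ n + 1)))
    rw [FiniteField.sum_pow_lt_card_sub_one F _ hdeg, sum_mul_sq_add_pow_pow_eq hw hF] at hsum
    simpa [ha] using hsum
  rw [show (2 ^ n) ^ 2 + 2 ^ n + 1 = 3 * (12 * w ^ 2 + 18 * w + 7) by rw [hw]; ring,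
    Nat.mul_div_cancel_left _ three_pos, pow_mul']
  exact CharTwo.pow_three_eq_one_and_ne_one hb
end

section
/- Let q be a prime power, s and d positive integers with q - 1 = d·s, f ∈ F_q[x], and r a positive integer. Then x^r · f(x^s) permutes F_q if and only if gcd(r, s) = 1 and the map x ↦ x^r · f(x)^s permutes the set μ_d of d-th roots of unity in F_q^*. -/
open Function Set

section aux
variable {F : Type*} [Field F] [Fintype F]

lemma aux_pow_mem (d s : ℕ) (hds : Fintype.card F - 1 = d * s)
    {x : F} (hx : x ≠ 0) : (x ^ s) ^ d = 1 := by
  rw [← pow_mul, mul_comm s d, ← hds]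
  exact FiniteField.pow_card_sub_one_eq_one x hx

lemma aux_surj (d s : ℕ) (hd : 0 < d) (hds : Fintype.card F - 1 = d * s)
    {y : F} (hy : y ^ d = 1) : ∃ x : F, x ≠ 0 ∧ x ^ s = y := by
  classical
  have hy0 : y ≠ 0 := by
    rintro rfl
    rw [zero_pow hd.ne'] at hy
    exact zero_ne_one hy
  obtain ⟨g, hg⟩ := IsCyclic.exists_generator (α := Fˣ)
  have hcard : orderOf g = d * s := by
    rw [orderOf_eq_card_of_forall_mem_zpowers hg, Nat.card_eq_fintype_card,
      Fintype.card_units, hds]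
  obtain ⟨n, hn0⟩ := (mem_powers_iff_mem_zpowers).2 (hg (Units.mk0 y hy0))
  have hn : g ^ n = Units.mk0 y hy0 := hn0
  have h1 : g ^ (n * d) = 1 := by
    rw [pow_mul, hn]
    ext
    rw [Units.val_pow_eq_pow_val, Units.val_one, Units.val_mk0]
    exact hy
  have hdvd : d * s ∣ n * d := hcard ▸ orderOf_dvd_of_pow_eq_one h1
  have hsn : s ∣ n := by
    have : d * s ∣ d * n := by rwa [mul_comm n d] at hdvd
    exact (mul_dvd_mul_iff_left hd.ne').mp this
  obtain ⟨k, rfl⟩ := hsn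
  refine ⟨((g ^ k : Fˣ) : F), Units.ne_zero _, ?_⟩
  rw [← Units.val_pow_eq_pow_val, ← pow_mul, mul_comm k s, hn, Units.val_mk0]

lemma aux_zeta (m : ℕ) (hm : 0 < m) (hm1 : m ≠ 1) (hmd : m ∣ Fintype.card F - 1) :
    ∃ ζ : F, ζ ^ m = 1 ∧ ζ ≠ 1 := by
  classical
  obtain ⟨g, hg⟩ := IsCyclic.exists_generator (α := Fˣ)
  have hcard : orderOf g = Fintype.card F - 1 := by
    rw [orderOf_eq_card_of_forall_mem_zpowers hg, Nat.card_eq_fintype_card,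
      Fintype.card_units]
  have hN : 0 < Fintype.card F - 1 := by
    have := Fintype.one_lt_card (α := F)
    omega
  set N := Fintype.card F - 1 with hNdef
  obtain ⟨k, hk⟩ := hmd
  refine ⟨((g ^ k : Fˣ) : F), ?_, ?_⟩
  · rw [← Units.val_pow_eq_pow_val, ← pow_mul, mul_comm k m, ← hk, ← hcard,
      pow_orderOf_eq_one, Units.val_one]
  · intro h
    have hgk : g ^ k = 1 := Units.ext (by rwa [Units.val_pow_eq_pow_val, Units.val_one])
    have hk0 : 0 < k := by
      rcases Nat.eq_zero_or_pos k with h0 | h0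
      · subst h0
        simp only [Nat.mul_zero] at hk
        omega
      · exact h0
    have := Nat.le_of_dvd hk0 (hcard ▸ orderOf_dvd_of_pow_eq_one hgk)
    have hmlt : 2 ≤ m := by omega
    nlinarith [hk, this, hN]

end aux

theorem stmt14 (F : Type*) [Field F] [Fintype F] (d s r : ℕ) (hd : 0 < d) (hs : 0 < s)
    (hds : Fintype.card F - 1 = d * s) (f : Polynomial F) (hr : 0 < r) :
    Function.Bijective (fun x : F => x ^ r * f.eval (x ^ s)) ↔
      (Nat.gcd r s = 1 ∧
        Set.BijOn (fun x : F => x ^ r * (f.eval x) ^ s)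
          {x : F | x ^ d = 1} {x : F | x ^ d = 1}) := by
  set g : F → F := fun x => x ^ r * f.eval (x ^ s) with hgdef
  set h : F → F := fun x => x ^ r * (f.eval x) ^ s with hhdef
  have key : ∀ x : F, (g x) ^ s = h (x ^ s) := by
    intro x
    simp only [hgdef, hhdef, mul_pow, pow_right_comm]
  have g0 : g 0 = 0 := by simp [hgdef, zero_pow hr.ne']
  constructor
  · intro hbij
    have gnz : ∀ x : F, x ≠ 0 → g x ≠ 0 := by
      intro x hx hgx
      exact hx (hbij.injective (hgx.trans g0.symm))
    have hmapsTo : MapsTo h {x : F | x ^ d = 1} {x : F | x ^ d = 1} := by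
      intro y hy
      obtain ⟨x, hx0, rfl⟩ := aux_surj d s hd hds hy
      rw [mem_setOf_eq, ← key]
      exact aux_pow_mem d s hds (gnz x hx0)
    have hsurjOn : SurjOn h {x : F | x ^ d = 1} {x : F | x ^ d = 1} := by
      intro z hz
      obtain ⟨w, hw0, hws⟩ := aux_surj d s hd hds hz
      obtain ⟨x, rfl⟩ := hbij.surjective w
      have hx0 : x ≠ 0 := by
        rintro rfl
        exact hw0 g0
      exact ⟨x ^ s, aux_pow_mem d s hds hx0, by rw [← key, hws]⟩
    refine ⟨?_, ((Set.toFinite _).surjOn_iff_bijOn_of_mapsTo hmapsTo).mp hsurjOn⟩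
    by_contra hm1
    have hm : 0 < Nat.gcd r s := Nat.gcd_pos_of_pos_left s hr
    have hmd : Nat.gcd r s ∣ Fintype.card F - 1 := by
      rw [hds]
      exact (Nat.gcd_dvd_right r s).trans (dvd_mul_left s d)
    obtain ⟨ζ, hζm, hζ1⟩ := aux_zeta (Nat.gcd r s) hm hm1 hmd
    have hζr : ζ ^ r = 1 := by
      obtain ⟨a, ha⟩ := Nat.gcd_dvd_left r s
      rw [ha, pow_mul, hζm, one_pow]
    have hζs : ζ ^ s = 1 := by
      obtain ⟨a, ha⟩ := Nat.gcd_dvd_right r s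
      rw [ha, pow_mul, hζm, one_pow]
    have : g ζ = g 1 := by simp [hgdef, hζr, hζs]
    exact hζ1 (hbij.injective this)
  · rintro ⟨hgcd, hb⟩
    have gnz : ∀ x : F, x ≠ 0 → g x ≠ 0 := by
      intro x hx hgx
      have hmem := hb.mapsTo (aux_pow_mem d s hds hx)
      rw [mem_setOf_eq, ← key, hgx, zero_pow hs.ne', zero_pow hd.ne'] at hmem
      exact zero_ne_one hmem
    have hinj : Injective g := by
      intro x y hxy
      by_cases hx0 : x = 0
      · subst hx0
        have hgy : g y = 0 := by rw [← hxy, g0]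
        by_contra hne
        exact gnz y (fun hy => hne hy.symm) hgy
      · have hy0 : y ≠ 0 := by
          rintro rfl
          exact gnz x hx0 (hxy.trans g0)
        have hss : x ^ s = y ^ s :=
          hb.injOn (aux_pow_mem d s hds hx0) (aux_pow_mem d s hds hy0)
            (by rw [← key, ← key, hxy])
        have fne : f.eval (x ^ s) ≠ 0 := by
          intro hf
          exact gnz x hx0 (by rw [hgdef]; simp [hf])
        have hrr : x ^ r = y ^ r := by
          have h3 : x ^ r * f.eval (x ^ s) = y ^ r * f.eval (y ^ s) := hxy
          rw [hss] at h3
          exact mul_right_cancel₀ (hss ▸ fne) h3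
        have hur : (x / y) ^ r = 1 := by
          rw [div_pow, hrr, div_self (pow_ne_zero _ hy0)]
        have hus : (x / y) ^ s = 1 := by
          rw [div_pow, hss, div_self (pow_ne_zero _ hy0)]
        have hord : orderOf (x / y) ∣ Nat.gcd r s :=
          Nat.dvd_gcd (orderOf_dvd_of_pow_eq_one hur) (orderOf_dvd_of_pow_eq_one hus)
        rw [hgcd, Nat.dvd_one, orderOf_eq_one_iff] at hord
        exact (div_eq_one_iff_eq hy0).mp hord
    exact Finite.injective_iff_bijective.mp hinj
end

section
/- Let q = 2^n with n even, a ∈ F_{q^3}^*, and suppose a^{(q^2+q+1)/3} = 1. Then x ↦ x^{q^2+q} + a·x^2 on F_{q^3} has a nonzero root, hence is not injective. -/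
open Subgroup in
lemma cyc_exists_pow_eq {G : Type*} [Group G] [Fintype G] [IsCyclic G] (m : ℕ) (a : G)
    (h : a ^ (Fintype.card G / Nat.gcd m (Fintype.card G)) = 1) : ∃ b : G, b ^ m = a := by
  obtain ⟨g, hg⟩ := IsCyclic.exists_generator (α := G)
  obtain ⟨k, hk⟩ : ∃ k : ℕ, g ^ k = a := by
    have := hg a
    rwa [← mem_powers_iff_mem_zpowers, Submonoid.mem_powers_iff] at this
  set N := Fintype.card G with hN
  set d := Nat.gcd m N with hd
  have hdN : d ∣ N := Nat.gcd_dvd_right m N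
  have hNpos : 0 < N := Fintype.card_pos
  have hdpos : 0 < d := Nat.gcd_pos_of_pos_right m hNpos
  have hord : orderOf g = N := (orderOf_eq_card_of_forall_mem_zpowers hg).trans Nat.card_eq_fintype_card
  have h2 : g ^ (k * (N / d)) = 1 := by rw [pow_mul, hk, h]
  have h3 : N ∣ k * (N / d) := by have := orderOf_dvd_of_pow_eq_one h2; rwa [hord] at this
  have hdk : d ∣ k := by
    have h4 : d * (N / d) ∣ k * (N / d) := by rwa [Nat.mul_div_cancel' hdN]
    have hq : 0 < N / d := Nat.div_pos (Nat.le_of_dvd hNpos hdN) hdpos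
    exact (Nat.mul_dvd_mul_iff_right hq).mp h4
  obtain ⟨t, rfl⟩ := hdk
  refine ⟨g ^ (Nat.gcdA m N * t), ?_⟩
  rw [← zpow_natCast (g ^ (Nat.gcdA m N * t)) m, ← zpow_mul, ← hk, ← zpow_natCast g (d * t)]
  rw [zpow_eq_zpow_iff_modEq, hord]
  have hbez : (d : ℤ) = m * Nat.gcdA m N + N * Nat.gcdB m N := Nat.gcd_eq_gcd_ab m N
  have : (N : ℤ) ∣ (Nat.gcdA m N * t * m - (d * t : ℕ)) := by
    push_cast
    refine ⟨-(Nat.gcdB m N * t), ?_⟩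
    rw [hbez]; ring
  exact (Int.modEq_iff_dvd.mpr (by simpa using this)).symm

lemma arith15 (r : ℕ) (hr : r % 3 = 0) (hrpos : 0 < r) :
    ((r + 1) ^ 3 - 1) / Nat.gcd ((r + 1) ^ 2 + (r + 1) - 2) ((r + 1) ^ 3 - 1)
      = ((r + 1) ^ 2 + (r + 1) + 1) / 3 := by
  have e1 : (r + 1) ^ 2 + (r + 1) - 2 = r * (r + 3) := by
    have : (r + 1) ^ 2 + (r + 1) = r * (r + 3) + 2 := by ring
    omega
  have e2 : (r + 1) ^ 3 - 1 = r * (r * r + 3 * r + 3) := by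
    have : (r + 1) ^ 3 = r * (r * r + 3 * r + 3) + 1 := by ring
    omega
  have e3 : (r + 1) ^ 2 + (r + 1) + 1 = r * r + 3 * r + 3 := by ring
  rw [e1, e2, e3, Nat.gcd_mul_left]
  have e4 : r * r + 3 * r + 3 = 3 + (r + 3) * r := by ring
  have e5 : Nat.gcd (r + 3) (r * r + 3 * r + 3) = 3 := by
    rw [e4, Nat.gcd_add_mul_left_right, Nat.gcd_comm]
    exact Nat.gcd_eq_left (by omega)
  rw [e5, Nat.mul_div_mul_left _ _ hrpos]

theorem stmt15 (n : ℕ) (hn : Even n) (h0 : 0 < n)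
    (F : Type*) [Field F] [Fintype F] (hF : Fintype.card F = (2 ^ n) ^ 3)
    (a : F) (ha : a ≠ 0) (h1 : a ^ (((2 ^ n) ^ 2 + 2 ^ n + 1) / 3) = 1) :
    (∃ x : F, x ≠ 0 ∧ x ^ ((2 ^ n) ^ 2 + 2 ^ n) + a * x ^ 2 = 0) ∧
      ¬ Function.Injective (fun x : F => x ^ ((2 ^ n) ^ 2 + 2 ^ n) + a * x ^ 2) := by
  -- basic facts about q = 2^n
  obtain ⟨k, hk⟩ := hn
  have hq3 : (2 : ℕ) ^ n % 3 = 1 := by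
    have : (2 : ℕ) ^ n = 4 ^ k := by rw [hk, ← two_mul, pow_mul]; norm_num
    rw [this, Nat.pow_mod]; norm_num
  have hq4 : 4 ≤ (2 : ℕ) ^ n := by
    calc 4 = 2 ^ 2 := by norm_num
    _ ≤ 2 ^ n := Nat.pow_le_pow_right (by norm_num) (by omega)
  -- characteristic 2
  have hchar2 : CharP F 2 := by
    have hc0 : ((Fintype.card F : ℕ) : F) = 0 := FiniteField.cast_card_eq_zero F
    rw [hF] at hc0
    have h2z : (2 : F) = 0 := by
      have : ((2 : F) ^ n) ^ 3 = 0 := by push_cast at hc0; exact_mod_cast hc0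
      have := pow_eq_zero_iff (n := 3) (by norm_num) |>.mp this
      exact pow_eq_zero_iff (n := n) (by omega) |>.mp this
    have hd : ringChar F ∣ 2 := (ringChar.spec F 2).mp (by exact_mod_cast h2z)
    have hne : ringChar F ≠ 1 := CharP.ringChar_ne_one
    have : ringChar F = 2 := by
      rcases (Nat.dvd_prime Nat.prime_two).mp hd with h | h
      · exact absurd h hne
      · exact h
    exact this ▸ ringChar.charP F
  haveI := hchar2
  haveI : DecidableEq F := Classical.decEq F
  -- set r = q - 1
  set q := (2 : ℕ) ^ n with hqdef
  obtain ⟨r, hr⟩ : ∃ r, q = r + 1 := ⟨q - 1, by omega⟩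
  have hr3 : r % 3 = 0 := by omega
  have hrpos : 0 < r := by omega
  -- the unit a
  let ua : Fˣ := Units.mk0 a ha
  have hua : ua ^ ((q ^ 2 + q + 1) / 3) = 1 := by
    ext
    push_cast [Units.val_pow_eq_pow_val]
    exact h1
  have hcardu : Fintype.card Fˣ = (r + 1) ^ 3 - 1 := by
    rw [Fintype.card_units, hF, hr]
  -- find m-th root, m = q^2 + q - 2
  have hroot : ∃ b : Fˣ, b ^ (q ^ 2 + q - 2) = ua := by
    apply cyc_exists_pow_eq
    rw [hcardu, hr, arith15 r hr3 hrpos, ← hr]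
    exact hua
  obtain ⟨b, hb⟩ := hroot
  have hx0 : (b : F) ≠ 0 := Units.ne_zero b
  have hbv : (b : F) ^ (q ^ 2 + q - 2) = a := by
    have := congrArg Units.val hb
    rwa [Units.val_pow_eq_pow_val] at this
  have hkey : (b : F) ^ (q ^ 2 + q) + a * (b : F) ^ 2 = 0 := by
    have hm : q ^ 2 + q = (q ^ 2 + q - 2) + 2 := by
      have : 2 ≤ q := by omega
      have : 2 ≤ q ^ 2 + q := by nlinarith
      omega
    rw [hm, pow_add, hbv]
    exact CharTwo.add_self_eq_zero _
  refine ⟨⟨b, hx0, hkey⟩, ?_⟩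
  intro hinj
  have hz : (fun x : F => x ^ (q ^ 2 + q) + a * x ^ 2) 0 = 0 := by
    simp only [zero_pow (by positivity : q ^ 2 + q ≠ 0), ne_eq, OfNat.ofNat_ne_zero,
      not_false_eq_true, zero_pow (two_ne_zero), mul_zero, add_zero]
  exact hx0 (hinj (hkey.trans hz.symm))
end

section
/- Let q = 2^n with n even, a ∈ μ_{q^2-1} \ μ_{q+1} ⊆ F_{q^4}^*, and let z ∈ F_{q^2} \ F_q. Set L = (a+1)^2, G = (a^q+1)^2 z^q + L z, H = z^q(a^{2q} z^2 + z^{2q}) + z(a^2 z^{2q} + z^2), M = (a^q+1)^2 + L, N = a^{2q} z^2 + z^{2q} + z^2 + a^2 z^{2q}. Then G·N - H·M ≠ 0. -/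
theorem stmt19 (n : ℕ) (hn : Even n) (h0 : 0 < n)
    (F : Type*) [Field F] [Fintype F] (hF : Fintype.card F = (2 ^ n) ^ 4)
    (a z : F) (ha0 : a ≠ 0)
    (ha1 : a ^ ((2 ^ n) ^ 2 - 1) = 1) (ha2 : a ^ (2 ^ n + 1) ≠ 1)
    (hz1 : z ^ ((2 ^ n) ^ 2) = z) (hz2 : z ^ (2 ^ n) ≠ z) :
    ((a ^ (2 ^ n) + 1) ^ 2 * z ^ (2 ^ n) + (a + 1) ^ 2 * z) *
        (a ^ (2 * 2 ^ n) * z ^ 2 + z ^ (2 * 2 ^ n) + z ^ 2 + a ^ 2 * z ^ (2 * 2 ^ n)) -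
      (z ^ (2 ^ n) * (a ^ (2 * 2 ^ n) * z ^ 2 + z ^ (2 * 2 ^ n)) +
          z * (a ^ 2 * z ^ (2 * 2 ^ n) + z ^ 2)) *
        ((a ^ (2 ^ n) + 1) ^ 2 + (a + 1) ^ 2) ≠ 0 := by
  -- characteristic 2
  have hcast : ((Fintype.card F : ℕ) : F) = 0 := FiniteField.cast_card_eq_zero F
  rw [hF] at hcast
  push_cast at hcast
  have h2 : (2 : F) = 0 := by
    have h4n : ((2 : F) ^ n) ^ 4 = 0 := hcast
    have := pow_eq_zero_iff (n := 4) (by norm_num) |>.mp h4n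
    exact pow_eq_zero_iff (n := n) h0.ne' |>.mp this
  set b := a ^ (2 ^ n) with hb
  set w := z ^ (2 ^ n) with hw
  have e1 : a ^ (2 * 2 ^ n) = b ^ 2 := by rw [hb, mul_comm, pow_mul]
  have e2 : z ^ (2 * 2 ^ n) = w ^ 2 := by rw [hw, mul_comm, pow_mul]
  rw [e1, e2]
  have key :
      ((b + 1) ^ 2 * w + (a + 1) ^ 2 * z) *
          (b ^ 2 * z ^ 2 + w ^ 2 + z ^ 2 + a ^ 2 * w ^ 2) -
        (w * (b ^ 2 * z ^ 2 + w ^ 2) + z * (a ^ 2 * w ^ 2 + z ^ 2)) *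
          ((b + 1) ^ 2 + (a + 1) ^ 2) =
      (a * b + 1) ^ 2 * (w + z) ^ 3 := by
    linear_combination
      ((-1 : F) * w ^ 3 + (-1) * z * w ^ 2 + (-1) * z ^ 2 * w + (-1) * z ^ 3 +
        b * z ^ 2 * w + (-1) * b * z ^ 3 + (-1) * a * w ^ 3 + a * z * w ^ 2 +
        (-1) * a * b * w ^ 3 + (-3) * a * b * z * w ^ 2 + (-3) * a * b * z ^ 2 * w +
        (-1) * a * b * z ^ 3 + (-1) * a * b ^ 2 * z ^ 2 * w + a * b ^ 2 * z ^ 3 +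
        a ^ 2 * b * w ^ 3 + (-1) * a ^ 2 * b * z * w ^ 2 +
        (-2) * a ^ 2 * b ^ 2 * z * w ^ 2 + (-2) * a ^ 2 * b ^ 2 * z ^ 2 * w) * h2
  rw [key]
  have hneg : (-1 : F) = 1 := by linear_combination -h2
  have hab : a * b + 1 ≠ 0 := by
    intro h
    apply ha2
    have : a * b = -1 := by linear_combination h
    rw [hneg] at this
    calc a ^ (2 ^ n + 1) = a * b := by rw [hb, pow_succ, mul_comm]
      _ = 1 := this
  have hwz : w + z ≠ 0 := fun h => hz2 (by linear_combination h - z * h2)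
  exact mul_ne_zero (pow_ne_zero _ hab) (pow_ne_zero _ hwz)
end
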